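/- arXiv:1811.01630 — 3 statements merged into one kernel-verified Lean document; each statement's English description precedes it below -/
import Mathlib

section
/- Let r, k be positive integers, γ ∈ [0,1], and let 𝒰 be a distribution on [0,1] such that the probability that r+1 i.i.d. samples from 𝒰 sum to more than r is at least γ. Let u_1, …, u_k be i.i.d. samples from 𝒰 with k ≥ r+1, and let ζ = ⌊k/(r+1)⌋. Then Pr[u_1 + ⋯ + u_k ≤ r] ≤ (1 − γ)^ζ. -/
open MeasureTheory Set

lemma sum_meas (k : ℕ) : Measurable (fun x : Fin k → ℝ => ∑ i, x i) :=
  Finset.measurable_sum _ fun i _ => measurable_pi_apply i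

lemma good_meas (r k : ℕ) :
    MeasurableSet {x : Fin k → ℝ | ∑ i, x i ≤ (r : ℝ) ∧ ∀ i, x i ∈ Icc (0:ℝ) 1} := by
  have h1 : MeasurableSet {x : Fin k → ℝ | ∑ i, x i ≤ (r:ℝ)} :=
    measurableSet_le (sum_meas k) measurable_const
  have h2 : MeasurableSet (⋂ i, (fun x : Fin k → ℝ => x i) ⁻¹' Icc (0:ℝ) 1) :=
    MeasurableSet.iInter fun i => (measurable_pi_apply i) measurableSet_Icc
  have he : {x : Fin k → ℝ | ∑ i, x i ≤ (r : ℝ) ∧ ∀ i, x i ∈ Icc (0:ℝ) 1}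
      = {x : Fin k → ℝ | ∑ i, x i ≤ (r:ℝ)} ∩ ⋂ i, (fun x : Fin k → ℝ => x i) ⁻¹' Icc (0:ℝ) 1 := by
    ext x; simp
  rw [he]; exact h1.inter h2

lemma key (r : ℕ) (μ : Measure ℝ) [IsProbabilityMeasure μ] :
    ∀ n k, n * (r+1) ≤ k →
    (Measure.pi fun _ : Fin k => μ) {x | ∑ i, x i ≤ (r:ℝ) ∧ ∀ i, x i ∈ Icc (0:ℝ) 1}
      ≤ ((Measure.pi fun _ : Fin (r+1) => μ) {y | ∑ i, y i ≤ (r:ℝ)}) ^ n := by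
  intro n
  induction n with
  | zero => intro k _; simpa using prob_le_one
  | succ n ih =>
    intro k hkn
    have hk : r + 1 ≤ k := le_trans (by nlinarith) hkn
    obtain ⟨m, rfl⟩ := Nat.exists_eq_add_of_le hk
    have hm : n * (r+1) ≤ m := by nlinarith [hkn]
    set e1 := MeasurableEquiv.piCongrLeft (fun _ : Fin (r+1+m) => ℝ) finSumFinEquiv
    set e2 := (MeasurableEquiv.sumPiEquivProdPi (fun _ : Fin (r+1) ⊕ Fin m => ℝ)).symm
    have mp1 := measurePreserving_piCongrLeft (fun _ : Fin (r+1+m) => μ) finSumFinEquiv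
    have mp2 := measurePreserving_sumPiEquivProdPi_symm (fun _ : Fin (r+1) ⊕ Fin m => μ)
    have mp : MeasurePreserving (e1 ∘ e2)
        ((Measure.pi fun _ : Fin (r+1) => μ).prod (Measure.pi fun _ : Fin m => μ))
        (Measure.pi fun _ : Fin (r+1+m) => μ) := mp1.comp mp2
    set S := {x : Fin (r+1+m) → ℝ | ∑ i, x i ≤ (r:ℝ) ∧ ∀ i, x i ∈ Icc (0:ℝ) 1}
    have hSm : MeasurableSet S := good_meas r (r+1+m)
    rw [← mp.measure_preimage hSm.nullMeasurableSet]
    have hsub : (e1 ∘ e2) ⁻¹' S ⊆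
        {y : Fin (r+1) → ℝ | ∑ i, y i ≤ (r:ℝ)} ×ˢ
        {z : Fin m → ℝ | ∑ i, z i ≤ (r:ℝ) ∧ ∀ i, z i ∈ Icc (0:ℝ) 1} := by
      rintro ⟨y, z⟩ hyz
      simp only [mem_preimage, Function.comp_apply, S, mem_setOf_eq] at hyz
      obtain ⟨hsum, hIcc⟩ := hyz
      have hval : ∀ s : Fin (r+1) ⊕ Fin m,
          (e1 (e2 (y, z))) (finSumFinEquiv s) = Sum.elim y z s := by
        intro s
        rw [show (e1 (e2 (y,z))) (finSumFinEquiv s)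
            = Equiv.piCongrLeft (fun _ => ℝ) finSumFinEquiv (e2 (y,z)) (finSumFinEquiv s) from rfl,
          Equiv.piCongrLeft_apply_apply]
        cases s <;> rfl
      have hsum' : ∑ i, (e1 (e2 (y,z))) i = ∑ j, y j + ∑ j, z j := by
        rw [← Fintype.sum_equiv finSumFinEquiv (fun s => Sum.elim y z s)
          (fun i => (e1 (e2 (y,z))) i) (fun s => (hval s).symm)]
        simp [Fintype.sum_sum_type]
      have hIcc' : ∀ s : Fin (r+1) ⊕ Fin m, Sum.elim y z s ∈ Icc (0:ℝ) 1 := by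
        intro s; rw [← hval s]; exact hIcc _
      have hy0 : (0:ℝ) ≤ ∑ j, y j :=
        Finset.sum_nonneg fun j _ => (hIcc' (Sum.inl j)).1
      have hz0 : (0:ℝ) ≤ ∑ j, z j :=
        Finset.sum_nonneg fun j _ => (hIcc' (Sum.inr j)).1
      rw [hsum'] at hsum
      refine ⟨by simp only [mem_setOf_eq]; linarith, ⟨by linarith, fun j => hIcc' (Sum.inr j)⟩⟩
    calc ((Measure.pi fun _ : Fin (r+1) => μ).prod (Measure.pi fun _ : Fin m => μ)) ((e1 ∘ e2) ⁻¹' S)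
        ≤ ((Measure.pi fun _ : Fin (r+1) => μ).prod (Measure.pi fun _ : Fin m => μ))
          ({y : Fin (r+1) → ℝ | ∑ i, y i ≤ (r:ℝ)} ×ˢ
           {z : Fin m → ℝ | ∑ i, z i ≤ (r:ℝ) ∧ ∀ i, z i ∈ Icc (0:ℝ) 1}) := measure_mono hsub
      _ ≤ ((Measure.pi fun _ : Fin (r+1) => μ) {y | ∑ i, y i ≤ (r:ℝ)}) *
          ((Measure.pi fun _ : Fin m => μ) {z | ∑ i, z i ≤ (r:ℝ) ∧ ∀ i, z i ∈ Icc (0:ℝ) 1}) := by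
            rw [Measure.prod_prod]
      _ ≤ ((Measure.pi fun _ : Fin (r+1) => μ) {y | ∑ i, y i ≤ (r:ℝ)}) *
          ((Measure.pi fun _ : Fin (r+1) => μ) {y | ∑ i, y i ≤ (r:ℝ)}) ^ n :=
            mul_le_mul_right (ih m hm) _
      _ = _ := (pow_succ' _ n).symm

/-- If r+1 i.i.d. samples from 𝒰 (a distribution on [0,1]) sum to more than r
with probability at least γ, then for k ≥ r+1 i.i.d. samples and
ζ = ⌊k/(r+1)⌋, the probability that the k samples sum to at most r is at most
(1-γ)^ζ. -/
theorem sum_le_r_prob (r k : ℕ) (hr : 1 ≤ r) (hk : r + 1 ≤ k) (γ : ℝ)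
    (hγ : 0 ≤ γ ∧ γ ≤ 1)
    (μ : Measure ℝ) [IsProbabilityMeasure μ]
    (hsupp : μ (Set.Icc (0:ℝ) 1)ᶜ = 0)
    (hγle : ENNReal.ofReal γ ≤
      (Measure.pi fun _ : Fin (r + 1) => μ) {x | (r : ℝ) < ∑ i, x i}) :
    (Measure.pi fun _ : Fin k => μ) {x | ∑ i, x i ≤ (r : ℝ)}
      ≤ ENNReal.ofReal ((1 - γ) ^ (k / (r + 1))) := by
  obtain ⟨hγ0, hγ1⟩ := hγ
  set ζ := k / (r + 1) with hζ
  set p := (Measure.pi fun _ : Fin (r+1) => μ) {y | ∑ i, y i ≤ (r:ℝ)} with hp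
  -- p ≤ ofReal (1 - γ)
  have hcompl : {y : Fin (r+1) → ℝ | ∑ i, y i ≤ (r:ℝ)}ᶜ = {x | (r : ℝ) < ∑ i, x i} := by
    ext y; simp [not_le]
  have hmeas : MeasurableSet {y : Fin (r+1) → ℝ | ∑ i, y i ≤ (r:ℝ)} :=
    measurableSet_le (sum_meas (r+1)) measurable_const
  have hadd : p + (Measure.pi fun _ : Fin (r+1) => μ) {x | (r : ℝ) < ∑ i, x i} = 1 := by
    rw [hp, ← hcompl, measure_add_measure_compl hmeas, measure_univ]
  have hple : p ≤ ENNReal.ofReal (1 - γ) := by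
    have h1 : ENNReal.ofReal (1 - γ) + ENNReal.ofReal γ = 1 := by
      rw [← ENNReal.ofReal_add (by linarith) hγ0]
      norm_num
    have hγne : ENNReal.ofReal γ ≠ ⊤ := ENNReal.ofReal_ne_top
    have h2 : p ≤ 1 - ENNReal.ofReal γ :=
      ENNReal.le_sub_of_add_le_right hγne (le_trans (add_le_add_right hγle p) hadd.le)
    rw [ENNReal.eq_sub_of_add_eq hγne h1]
    exact h2
  -- null bad set
  have hbad : (Measure.pi fun _ : Fin k => μ) {x : Fin k → ℝ | ¬ ∀ i, x i ∈ Icc (0:ℝ) 1} = 0 := by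
    have : {x : Fin k → ℝ | ¬ ∀ i, x i ∈ Icc (0:ℝ) 1} ⊆
        ⋃ i, (fun x : Fin k → ℝ => x i) ⁻¹' (Icc (0:ℝ) 1)ᶜ := by
      intro x hx
      simp only [mem_setOf_eq, not_forall] at hx
      obtain ⟨i, hi⟩ := hx
      exact mem_iUnion.2 ⟨i, hi⟩
    refine measure_mono_null this (measure_iUnion_null fun i => ?_)
    exact Measure.pi_eval_preimage_null (fun _ : Fin k => μ) hsupp
  have hζk : ζ * (r + 1) ≤ k := Nat.div_mul_le_self k (r+1)
  have hmain := key r μ ζ k hζk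
  have hsplit : (Measure.pi fun _ : Fin k => μ) {x | ∑ i, x i ≤ (r : ℝ)}
      ≤ p ^ ζ := by
    calc (Measure.pi fun _ : Fin k => μ) {x | ∑ i, x i ≤ (r : ℝ)}
        ≤ (Measure.pi fun _ : Fin k => μ)
            ({x | ∑ i, x i ≤ (r:ℝ) ∧ ∀ i, x i ∈ Icc (0:ℝ) 1} ∪
             {x : Fin k → ℝ | ¬ ∀ i, x i ∈ Icc (0:ℝ) 1}) := by
          apply measure_mono
          intro x hx
          by_cases h : ∀ i, x i ∈ Icc (0:ℝ) 1
          · exact Or.inl ⟨hx, h⟩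
          · exact Or.inr h
      _ ≤ (Measure.pi fun _ : Fin k => μ) {x | ∑ i, x i ≤ (r:ℝ) ∧ ∀ i, x i ∈ Icc (0:ℝ) 1}
            + (Measure.pi fun _ : Fin k => μ) {x : Fin k → ℝ | ¬ ∀ i, x i ∈ Icc (0:ℝ) 1} :=
          measure_union_le _ _
      _ = (Measure.pi fun _ : Fin k => μ) {x | ∑ i, x i ≤ (r:ℝ) ∧ ∀ i, x i ∈ Icc (0:ℝ) 1} := by
          rw [hbad, add_zero]
      _ ≤ p ^ ζ := hmain
  calc (Measure.pi fun _ : Fin k => μ) {x | ∑ i, x i ≤ (r : ℝ)}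
      ≤ p ^ ζ := hsplit
    _ ≤ (ENNReal.ofReal (1 - γ)) ^ ζ := pow_le_pow_left' hple ζ
    _ = ENNReal.ofReal ((1 - γ) ^ ζ) := (ENNReal.ofReal_pow (by linarith) ζ).symm
end

section
/- Let G = (A, B, E) be a bipartite graph with |B| = r·|A| = m for a positive integer r, n = |A|, and suppose that for all subsets S ⊆ A and T ⊆ B with |T| = m − r|S| + 1, the number of edges between S and T exceeds (16 log m)·min{|S|, |T|}. Then for any subgraph H = (A, B, E') of G with maximum degree at most 16 log m, the graph G − H = (A, B, E \ E') contains a perfect r-matching. -/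
open Finset Real

lemma card_filter_prod {A B : Type*} [DecidableEq A] [DecidableEq B]
    (S : Finset A) (T : Finset B) (P : A → B → Prop) [∀ a b, Decidable (P a b)] :
    ((S ×ˢ T).filter fun p => P p.1 p.2).card = ∑ a ∈ S, (T.filter (P a)).card := by
  rw [Finset.card_eq_sum_card_fiberwise (f := Prod.fst) (t := S)
    (fun p hp => (Finset.mem_product.1 (Finset.mem_filter.1 hp).1).1)]
  refine Finset.sum_congr rfl fun a ha => ?_
  refine Finset.card_bij (fun p _ => p.2) ?_ ?_ ?_
  · intro p hp
    simp only [Finset.mem_filter, Finset.mem_product] at hp ⊢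
    obtain ⟨⟨⟨_, h2⟩, hP⟩, hfst⟩ := hp
    exact ⟨h2, hfst ▸ hP⟩
  · rintro ⟨a1, b1⟩ h1 ⟨a2, b2⟩ h2 h
    simp only [Finset.mem_filter] at h1 h2
    cases h1.2; cases h2.2; cases h; rfl
  · intro b hb
    simp only [Finset.mem_filter] at hb
    exact ⟨(a, b), by simp [Finset.mem_filter, Finset.mem_product, ha, hb.1, hb.2], rfl⟩

lemma card_filter_prod' {A B : Type*} [DecidableEq A] [DecidableEq B]
    (S : Finset A) (T : Finset B) (P : A → B → Prop) [∀ a b, Decidable (P a b)] :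
    ((S ×ˢ T).filter fun p => P p.1 p.2).card = ∑ b ∈ T, (S.filter (fun a => P a b)).card := by
  rw [Finset.card_eq_sum_card_fiberwise (f := Prod.snd) (t := T)
    (fun p hp => (Finset.mem_product.1 (Finset.mem_filter.1 hp).1).2)]
  refine Finset.sum_congr rfl fun b hb => ?_
  refine Finset.card_bij (fun p _ => p.1) ?_ ?_ ?_
  · intro p hp
    simp only [Finset.mem_filter, Finset.mem_product] at hp ⊢
    obtain ⟨⟨⟨h1, _⟩, hP⟩, hsnd⟩ := hp
    exact ⟨h1, hsnd ▸ hP⟩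
  · rintro ⟨a1, b1⟩ h1 ⟨a2, b2⟩ h2 h
    simp only [Finset.mem_filter] at h1 h2
    cases h1.2; cases h2.2; cases h; rfl
  · intro a ha
    simp only [Finset.mem_filter] at ha
    exact ⟨(a, b), by simp [Finset.mem_filter, Finset.mem_product, hb, ha.1, ha.2], rfl⟩

/-- Local resilience of perfect r-matchings: if in the bipartite graph
G = (A, B, E) with |B| = r|A| = m every pair (S, T) with |T| = m - r|S| + 1
spans more than (16 log m)·min{|S|,|T|} edges, then removing any subgraph H
of maximum degree at most 16 log m leaves a perfect r-matching. -/
theorem matching_locally_resilient {A B : Type*} [Fintype A] [Fintype B]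
    [DecidableEq A] [DecidableEq B]
    (r n m : ℕ) (hr : 1 ≤ r) (hn : Fintype.card A = n)
    (hm : Fintype.card B = m) (hcard : m = r * n)
    (E E' : A → B → Prop) [∀ a b, Decidable (E a b)] [∀ a b, Decidable (E' a b)]
    (hsub : ∀ a b, E' a b → E a b)
    (hedges : ∀ S : Finset A, ∀ T : Finset B,
      (T.card : ℤ) = (m : ℤ) - r * S.card + 1 →
      16 * Real.log m * min (S.card : ℝ) (T.card : ℝ)
        < (((S ×ˢ T).filter fun p => E p.1 p.2).card : ℝ))
    (hdegA : ∀ a : A,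
      ((Finset.univ.filter fun b : B => E' a b).card : ℝ) ≤ 16 * Real.log m)
    (hdegB : ∀ b : B,
      ((Finset.univ.filter fun a : A => E' a b).card : ℝ) ≤ 16 * Real.log m) :
    ∃ f : B → A, (∀ b, E (f b) b ∧ ¬ E' (f b) b) ∧
      ∀ a, (Finset.univ.filter fun b : B => f b = a).card = r := by
  -- neighborhood in G - H
  set N : B → Finset A := fun b => Finset.univ.filter (fun a => E a b ∧ ¬ E' a b) with hN
  set t : B → Finset (A × Fin r) := fun b => (N b) ×ˢ Finset.univ with ht
  -- Hall condition
  have hall : ∀ s : Finset B, s.card ≤ (s.biUnion t).card := by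
    intro s
    have hbi : s.biUnion t = (s.biUnion N) ×ˢ (Finset.univ : Finset (Fin r)) := by
      ext ⟨a, i⟩
      simp [ht, Finset.mem_biUnion, Finset.mem_product]
    rw [hbi, Finset.card_product, Finset.card_univ, Fintype.card_fin]
    by_contra hlt
    push_neg at hlt
    set NT := s.biUnion N with hNT
    set S : Finset A := Finset.univ \ NT with hS
    have hNTcard : NT.card ≤ n := hn ▸ Finset.card_le_univ _
    have hScard : S.card = n - NT.card := by
      rw [hS, Finset.card_sdiff_of_subset (Finset.subset_univ _), Finset.card_univ, hn]
    -- S nonempty (else contradiction with card s ≤ m)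
    have hsle : s.card ≤ m := hm ▸ Finset.card_le_univ _
    have hNTlt : NT.card < n := by
      by_contra hge
      push_neg at hge
      have he : NT.card = n := le_antisymm hNTcard hge
      have : NT.card * r = m := by rw [he, hcard, Nat.mul_comm]
      omega
    -- choose T' ⊆ s with card r * NT.card + 1
    obtain ⟨T', hT'sub, hT'card⟩ := Finset.exists_subset_card_eq (s:=s) (n:= r * NT.card + 1)
      (by rw [Nat.mul_comm]; omega)
    have h1 : r * S.card + r * NT.card = m := by
      rw [hScard, hcard, ← Nat.mul_add]
      congr 1
      omega
    have hT'int : (T'.card : ℤ) = (m : ℤ) - r * S.card + 1 := by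
      have h1' : (r : ℤ) * S.card + r * NT.card = m := by exact_mod_cast h1
      rw [hT'card]
      push_cast
      linarith
    have hE := hedges S T' hT'int
    have hEsub : (S ×ˢ T').filter (fun p => E p.1 p.2) ⊆
        (S ×ˢ T').filter (fun p => E' p.1 p.2) := by
      intro p hp
      simp only [Finset.mem_filter, Finset.mem_product] at hp ⊢
      refine ⟨hp.1, ?_⟩
      by_contra hnot
      have hmem : p.1 ∈ N p.2 := by
        simp only [hN, Finset.mem_filter, Finset.mem_univ, true_and]
        exact ⟨hp.2, hnot⟩
      have : p.1 ∈ NT := Finset.mem_biUnion.2 ⟨p.2, hT'sub hp.1.2, hmem⟩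
      have hS' : p.1 ∉ NT := (Finset.mem_sdiff.1 hp.1.1).2
      exact hS' this
    have hb1 : ((((S ×ˢ T').filter fun p => E' p.1 p.2).card : ℝ)) ≤
        16 * Real.log m * S.card := by
      rw [card_filter_prod]
      push_cast
      calc ∑ a ∈ S, ((T'.filter (E' a)).card : ℝ)
          ≤ ∑ _a ∈ S, 16 * Real.log m := by
            refine Finset.sum_le_sum fun a _ => ?_
            refine le_trans ?_ (hdegA a)
            exact_mod_cast Finset.card_le_card
              (Finset.filter_subset_filter _ (Finset.subset_univ T'))
        _ = 16 * Real.log m * S.card := by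
            rw [Finset.sum_const, nsmul_eq_mul]; ring
    have hb2 : ((((S ×ˢ T').filter fun p => E' p.1 p.2).card : ℝ)) ≤
        16 * Real.log m * T'.card := by
      rw [card_filter_prod']
      push_cast
      calc ∑ b ∈ T', ((S.filter (fun a => E' a b)).card : ℝ)
          ≤ ∑ _b ∈ T', 16 * Real.log m := by
            refine Finset.sum_le_sum fun b _ => ?_
            refine le_trans ?_ (hdegB b)
            exact_mod_cast Finset.card_le_card
              (Finset.filter_subset_filter _ (Finset.subset_univ S))
        _ = 16 * Real.log m * T'.card := by
            rw [Finset.sum_const, nsmul_eq_mul]; ring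
    have hmin : ((((S ×ˢ T').filter fun p => E' p.1 p.2).card : ℝ)) ≤
        16 * Real.log m * min (S.card : ℝ) (T'.card : ℝ) := by
      rcases min_cases (S.card : ℝ) (T'.card : ℝ) with ⟨h, _⟩ | ⟨h, _⟩ <;> rw [h]
      · exact hb1
      · exact hb2
    have hle : ((((S ×ˢ T').filter fun p => E p.1 p.2).card : ℝ)) ≤
        (((S ×ˢ T').filter fun p => E' p.1 p.2).card : ℝ) := by
      exact_mod_cast Finset.card_le_card hEsub
    linarith
  obtain ⟨f, hfinj, hft⟩ := (Finset.all_card_le_biUnion_card_iff_exists_injective t).1 hall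
  have hfbij : Function.Bijective f := by
    rw [Fintype.bijective_iff_injective_and_card]
    refine ⟨hfinj, ?_⟩
    simp [hm, hcard, hn, Nat.mul_comm]
  refine ⟨fun b => (f b).1, fun b => ?_, fun a => ?_⟩
  · have := hft b
    simp only [ht, Finset.mem_product, hN, Finset.mem_filter] at this
    exact this.1.2
  · have : (Finset.univ.filter fun b : B => (f b).1 = a) =
        (Finset.univ.filter fun p : A × Fin r => p.1 = a).image (Function.surjInv hfbij.2) := by
      ext b
      simp only [Finset.mem_filter, Finset.mem_univ, true_and, Finset.mem_image]
      constructor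
      · intro h
        exact ⟨f b, h, hfinj (Function.surjInv_eq hfbij.2 (f b))⟩
      · rintro ⟨p, hp, rfl⟩
        rw [Function.surjInv_eq hfbij.2]
        exact hp
    rw [this, Finset.card_image_of_injective _ (Function.injective_surjInv hfbij.2)]
    have : (Finset.univ.filter fun p : A × Fin r => p.1 = a) =
        ({a} : Finset A) ×ˢ (Finset.univ : Finset (Fin r)) := by
      ext ⟨x, i⟩
      simp [eq_comm]
    rw [this, Finset.card_product]
    simp
end

section
/- Let n ≥ 1, and let z_1, …, z_n be nonnegative integers summing to m = rn + ℓ where r ≥ 1 and 1 ≤ ℓ ≤ n − 1. Suppose ρ ∈ (0,1) and for every pair (i, i') with z_i ≤ r < z_{i'} we assign weight z_{i'}/r. Then the total weight Σ_{i: z_i ≤ r} Σ_{i': z_{i'} > r} z_{i'}/r is at least ℓ(n − ℓ)/(r(r+1)); consequently ρ raised to this total weight is at most ρ^{ℓ(n−ℓ)/(r(r+1))}. -/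
open Finset

/-- The total weight Σ_{i : z_i ≤ r} Σ_{i' : z_{i'} > r} z_{i'}/r is at least
ℓ(n-ℓ)/(r(r+1)), and consequently ρ to this total weight is at most
ρ^{ℓ(n-ℓ)/(r(r+1))} for ρ ∈ (0,1). -/
theorem total_weight_bound (n r ℓ : ℕ) (hn : 1 ≤ n) (hr : 1 ≤ r)
    (hℓ : 1 ≤ ℓ ∧ ℓ ≤ n - 1) (z : Fin n → ℕ)
    (hz : ∑ i, z i = r * n + ℓ) (ρ : ℝ) (hρ : 0 < ρ ∧ ρ < 1) :
    ((ℓ : ℝ) * ((n : ℝ) - ℓ) / ((r : ℝ) * ((r : ℝ) + 1))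
        ≤ ∑ i ∈ Finset.univ.filter (fun i => z i ≤ r),
            ∑ i' ∈ Finset.univ.filter (fun i' => r < z i'), (z i' : ℝ) / r) ∧
      (ρ ^ (∑ i ∈ Finset.univ.filter (fun i => z i ≤ r),
            ∑ i' ∈ Finset.univ.filter (fun i' => r < z i'), (z i' : ℝ) / r)
        ≤ ρ ^ ((ℓ : ℝ) * ((n : ℝ) - ℓ) / ((r : ℝ) * ((r : ℝ) + 1)))) := by
  obtain ⟨hℓ1, hℓ2⟩ := hℓ
  obtain ⟨hρ0, hρ1⟩ := hρ
  have hℓn : ℓ < n := by omega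
  set S := Finset.univ.filter (fun i => z i ≤ r) with hS
  set B := Finset.univ.filter (fun i => r < z i) with hB
  have hdisj : Disjoint S B := by
    simp only [hS, hB, Finset.disjoint_left, Finset.mem_filter, Finset.mem_univ, true_and]
    exact fun i h => not_lt.mpr h
  have hunion : S ∪ B = Finset.univ := by
    ext i
    simp only [hS, hB, Finset.mem_union, Finset.mem_filter, Finset.mem_univ, true_and, iff_true]
    exact le_or_gt _ _
  have hcard : S.card + B.card = n := by
    rw [← Finset.card_union_of_disjoint hdisj, hunion, Finset.card_univ, Fintype.card_fin]
  have hsplit : ∑ i ∈ S, z i + ∑ i ∈ B, z i = r * n + ℓ := by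
    rw [← Finset.sum_union hdisj, hunion]; exact hz
  have hSsum : ∑ i ∈ S, z i ≤ r * S.card := by
    calc ∑ i ∈ S, z i ≤ ∑ _i ∈ S, r := Finset.sum_le_sum (fun i hi => by
          simp only [hS, Finset.mem_filter] at hi; exact hi.2)
      _ = r * S.card := by rw [Finset.sum_const, smul_eq_mul, mul_comm]
  have hBsum : (r + 1) * B.card ≤ ∑ i ∈ B, z i := by
    calc (r + 1) * B.card = ∑ _i ∈ B, (r + 1) := by
          rw [Finset.sum_const, smul_eq_mul, mul_comm]
      _ ≤ ∑ i ∈ B, z i := Finset.sum_le_sum (fun i hi => by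
          simp only [hB, Finset.mem_filter] at hi; omega)
  have key1 : ℓ ≤ ∑ i ∈ B, z i := by
    have hsc : S.card ≤ n := by omega
    nlinarith [hsplit, hSsum]
  have key2 : n - ℓ ≤ S.card * (r + 1) := by
    have h1 : (r + 1) * B.card ≤ r * n + ℓ := by omega
    have h2 : B.card = n - S.card := by omega
    have hsc : S.card ≤ n := by omega
    zify [hℓn.le, hsc] at h1 h2 ⊢
    nlinarith
  have hr0 : (0:ℝ) < r := by exact_mod_cast hr
  have hR : (∑ i ∈ S, ∑ i' ∈ B, (z i' : ℝ) / r)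
      = (S.card : ℝ) * ((∑ i' ∈ B, (z i' : ℝ)) / r) := by
    rw [Finset.sum_const, nsmul_eq_mul, Finset.sum_div]
  have key1' : (ℓ : ℝ) ≤ ∑ i' ∈ B, (z i' : ℝ) := by exact_mod_cast key1
  have key2' : (n : ℝ) - ℓ ≤ (S.card : ℝ) * ((r : ℝ) + 1) := by
    have := key2
    zify [hℓn.le] at this
    exact_mod_cast this
  have main : (ℓ : ℝ) * ((n : ℝ) - ℓ) / ((r : ℝ) * ((r : ℝ) + 1))
      ≤ ∑ i ∈ S, ∑ i' ∈ B, (z i' : ℝ) / r := by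
    rw [hR, mul_div_assoc', div_le_div_iff₀ (by positivity) hr0]
    have hℓ0 : (0:ℝ) ≤ (ℓ : ℝ) := by positivity
    have h := mul_le_mul key2' key1' hℓ0 (by positivity)
    nlinarith [mul_le_mul_of_nonneg_right h hr0.le]
  exact ⟨main, Real.rpow_le_rpow_of_exponent_ge hρ0 hρ1.le main⟩
end
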